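/- Let m ≥ 3 be an odd natural number and l ≥ 1 a natural number. Consider S := sum over all k with 1 ≤ k ≤ m of [ binom(m-1, k-1) * (1 - k/2)^l + binom(m-1, k) * (-k/2)^l ]. Then S < 0 if l is odd, and S > 0 if l is even. -/

import Mathlib

/-!
The sum is compared with `0` term by term. For even `l` every term is nonnegative and the
term `k = 1` equals `(1/2)^l (1 + (m - 1)) > 0`. For odd `l` both bases `1 - k/2` and `-k/2`
are nonpositive once `k ≥ 2`, while the term `k = 1` equals `(1/2)^l (1 - (m - 1))`, which is
negative as soon as `m ≥ 3`.
-/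

open Finset

/-- The `k`-th term of the sum, with `n = m - 1`. -/
noncomputable def spinorTraceTerm (n l k : ℕ) : ℝ :=
  (n.choose (k - 1) : ℝ) * (1 - (k : ℝ) / 2) ^ l + (n.choose k : ℝ) * (-(k : ℝ) / 2) ^ l

lemma spinorTraceTerm_one (n l : ℕ) :
    spinorTraceTerm n l 1 = (1 / 2 : ℝ) ^ l + n * (-(1 / 2) : ℝ) ^ l := by
  simp only [spinorTraceTerm, Nat.sub_self, Nat.choose_zero_right, Nat.choose_one_right]
  norm_num

lemma spinorTraceTerm_nonneg {l : ℕ} (hl : Even l) (n k : ℕ) : 0 ≤ spinorTraceTerm n l k :=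
  add_nonneg (mul_nonneg (Nat.cast_nonneg _) (hl.pow_nonneg _))
    (mul_nonneg (Nat.cast_nonneg _) (hl.pow_nonneg _))

lemma spinorTraceTerm_one_pos {l : ℕ} (hl : Even l) (n : ℕ) : 0 < spinorTraceTerm n l 1 := by
  rw [spinorTraceTerm_one]
  exact add_pos_of_pos_of_nonneg (by positivity) (mul_nonneg n.cast_nonneg (hl.pow_nonneg _))

lemma spinorTraceTerm_one_neg {n l : ℕ} (hl : Odd l) (hn : 2 ≤ n) :
    spinorTraceTerm n l 1 < 0 := by
  have hn' : (2 : ℝ) ≤ n := by exact_mod_cast hn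
  have hpos : (0 : ℝ) < (1 / 2) ^ l := by positivity
  rw [spinorTraceTerm_one, hl.neg_pow]
  nlinarith

lemma spinorTraceTerm_nonpos {n l k : ℕ} (hl : Odd l) (hn : 2 ≤ n) (hk : 1 ≤ k) :
    spinorTraceTerm n l k ≤ 0 := by
  obtain rfl | hk2 := hk.eq_or_lt
  · exact (spinorTraceTerm_one_neg hl hn).le
  have hk' : (2 : ℝ) ≤ k := by exact_mod_cast hk2
  have h₁ : (1 - (k : ℝ) / 2) ^ l ≤ 0 := hl.pow_nonpos_iff.mpr (by linarith)
  have h₂ : (-(k : ℝ) / 2) ^ l ≤ 0 := hl.pow_nonpos_iff.mpr (by linarith)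
  exact add_nonpos (mul_nonpos_of_nonneg_of_nonpos (Nat.cast_nonneg _) h₁)
    (mul_nonpos_of_nonneg_of_nonpos (Nat.cast_nonneg _) h₂)

theorem stmt_8_general (m l : ℕ) (hm : 3 ≤ m) :
    (Odd l →
      ∑ k ∈ Finset.Icc 1 m,
        (((m - 1).choose (k - 1) : ℝ) * (1 - (k : ℝ) / 2) ^ l
          + ((m - 1).choose k : ℝ) * (-(k : ℝ) / 2) ^ l) < 0) ∧
    (Even l →
      0 < ∑ k ∈ Finset.Icc 1 m,
        (((m - 1).choose (k - 1) : ℝ) * (1 - (k : ℝ) / 2) ^ l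
          + ((m - 1).choose k : ℝ) * (-(k : ℝ) / 2) ^ l)) := by
  have hone : 1 ∈ Icc 1 m := mem_Icc.mpr ⟨le_rfl, by omega⟩
  change (Odd l → ∑ k ∈ Icc 1 m, spinorTraceTerm (m - 1) l k < 0) ∧
    (Even l → 0 < ∑ k ∈ Icc 1 m, spinorTraceTerm (m - 1) l k)
  refine ⟨fun hodd => ?_, fun heven => ?_⟩
  · exact sum_neg' (fun k hk => spinorTraceTerm_nonpos hodd (by omega) (mem_Icc.mp hk).1)
      ⟨1, hone, spinorTraceTerm_one_neg hodd (by omega)⟩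
  · exact sum_pos' (fun k _ => spinorTraceTerm_nonneg heven _ k)
      ⟨1, hone, spinorTraceTerm_one_pos heven _⟩

theorem stmt_8 (m l : ℕ) (hm : 3 ≤ m) (hmo : Odd m) (hl : 1 ≤ l) :
    (Odd l →
      ∑ k ∈ Finset.Icc 1 m,
        (((m - 1).choose (k - 1) : ℝ) * (1 - (k : ℝ) / 2) ^ l
          + ((m - 1).choose k : ℝ) * (-(k : ℝ) / 2) ^ l) < 0) ∧
    (Even l →
      0 < ∑ k ∈ Finset.Icc 1 m,
        (((m - 1).choose (k - 1) : ℝ) * (1 - (k : ℝ) / 2) ^ l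
          + ((m - 1).choose k : ℝ) * (-(k : ℝ) / 2) ^ l)) :=
  stmt_8_general m l hm
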